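/- Objective rewriting for the integral witness optimization: for finite sets A, B, C, relation R_1 ⊆ A × B with every a ∈ A incident to some b, and an assignment C_b ⊆ C for each b ∈ B satisfying ⋃_{b : (a,b) ∈ R_1} C_b = C for all a ∈ A, one has ∑_{b ∈ B} |C_b| = ∑_{c ∈ C} |{b ∈ B : c ∈ C_b}|, and the minimum of ∑_{b ∈ B} |C_b| over all feasible assignments equals |C| · x*, where x* = min{ |B'| : B' ⊆ B, ∀a ∈ A ∃b ∈ B', (a,b) ∈ R_1 }. -/

import Mathlib

/-!
Counting the pairs `(b, c)` with `c ∈ C_b` by `c` instead of by `b` gives the identity. For a fixed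
`c`, feasibility says exactly that `{b | c ∈ C_b}` is a cover, so each of the `|C|` column counts is
at least `x*`; conversely, putting all of `C` on a minimum cover and nothing elsewhere is feasible
and costs `|C| · x*`.
-/

open Set Classical

attribute [local instance] Classical.propDecidable

/-- The covering number `x*`: the minimum size of `B' ⊆ B` such that every
`a ∈ A` is adjacent via `R₁` to some `b ∈ B'`. -/
noncomputable def coverNum {α β : Type} (R1 : Set (α × β)) : ℕ :=
  sInf {n | ∃ B' : Finset β, (∀ a : α, ∃ b ∈ B', (a, b) ∈ R1) ∧ n = B'.card}

section WitnessAssignment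

variable {α β γ : Type} {R1 : Set (α × β)}

def IsCover (R1 : Set (α × β)) (B' : Finset β) : Prop :=
  ∀ a : α, ∃ b ∈ B', (a, b) ∈ R1

def IsWitnessAssignment (R1 : Set (α × β)) (CB : β → Finset γ) : Prop :=
  ∀ (a : α) (c : γ), ∃ b, (a, b) ∈ R1 ∧ c ∈ CB b

theorem coverNum_le_card {B' : Finset β} (hB' : IsCover R1 B') : coverNum R1 ≤ B'.card :=
  Nat.sInf_le ⟨B', hB', rfl⟩

theorem exists_isCover_card_eq_coverNum [Fintype β] (ha : ∀ a : α, ∃ b, (a, b) ∈ R1) :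
    ∃ B' : Finset β, IsCover R1 B' ∧ B'.card = coverNum R1 := by
  have hne : {n | ∃ B' : Finset β, IsCover R1 B' ∧ n = B'.card}.Nonempty :=
    ⟨_, Finset.univ, fun a => (ha a).imp fun b hb => ⟨Finset.mem_univ b, hb⟩, rfl⟩
  obtain ⟨B', hB', hcard⟩ := Nat.sInf_mem hne
  exact ⟨B', hB', hcard.symm⟩

theorem IsWitnessAssignment.isCover_filter_mem [Fintype β] {CB : β → Finset γ}
    (hCB : IsWitnessAssignment R1 CB) (c : γ) :
    IsCover R1 (Finset.univ.filter fun b => c ∈ CB b) := fun a =>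
  let ⟨b, hab, hc⟩ := hCB a c
  ⟨b, Finset.mem_filter.2 ⟨Finset.mem_univ b, hc⟩, hab⟩

theorem IsCover.isWitnessAssignment_univ_on [Fintype γ] {B' : Finset β} (hB' : IsCover R1 B') :
    IsWitnessAssignment R1 fun b => if b ∈ B' then (Finset.univ : Finset γ) else ∅ := by
  intro a c
  obtain ⟨b, hbB', hab⟩ := hB' a
  exact ⟨b, hab, by simp [hbB']⟩

theorem sum_card_univ_on [Fintype β] [Fintype γ] (B' : Finset β) :
    ∑ b : β, (if b ∈ B' then (Finset.univ : Finset γ) else ∅).card =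
      Fintype.card γ * B'.card := by
  simp only [apply_ite Finset.card, Finset.card_univ, Finset.card_empty]
  rw [Finset.sum_ite_mem, Finset.univ_inter, Finset.sum_const, smul_eq_mul, mul_comm]

theorem sum_card_eq_sum_card_filter_mem [Fintype β] [Fintype γ] (CB : β → Finset γ) :
    ∑ b : β, (CB b).card = ∑ c : γ, (Finset.univ.filter fun b : β => c ∈ CB b).card := by
  convert Finset.sum_card_bipartiteAbove_eq_sum_card_bipartiteBelow (fun b c => c ∈ CB b)
    using 3 with b
  · ext c
    simp [Finset.bipartiteAbove]
  · rfl

end WitnessAssignment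

theorem integral_objective_rewriting_general {α β γ : Type}
    [Fintype β] [Fintype γ]
    (R1 : Set (α × β)) (ha : ∀ a : α, ∃ b, (a, b) ∈ R1) :
    (∀ CB : β → Finset γ,
      (∀ (a : α) (c : γ), ∃ b, (a, b) ∈ R1 ∧ c ∈ CB b) →
      ∑ b : β, (CB b).card =
        ∑ c : γ, (Finset.univ.filter fun b : β => c ∈ CB b).card) ∧
    IsLeast {n | ∃ CB : β → Finset γ,
        (∀ (a : α) (c : γ), ∃ b, (a, b) ∈ R1 ∧ c ∈ CB b) ∧
        n = ∑ b : β, (CB b).card}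
      (Fintype.card γ * coverNum R1) := by
  refine ⟨fun CB _ => sum_card_eq_sum_card_filter_mem CB, ?_, ?_⟩
  · obtain ⟨B', hB', hcard⟩ := exists_isCover_card_eq_coverNum ha
    exact ⟨_, hB'.isWitnessAssignment_univ_on, by rw [sum_card_univ_on, hcard]⟩
  · rintro n ⟨CB, hCB, rfl⟩
    rw [sum_card_eq_sum_card_filter_mem CB]
    calc Fintype.card γ * coverNum R1 = ∑ _c : γ, coverNum R1 := by
          rw [Finset.sum_const, Finset.card_univ, smul_eq_mul]
      _ ≤ _ := Finset.sum_le_sum fun c _ =>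
          coverNum_le_card (IsWitnessAssignment.isCover_filter_mem hCB c)

/-- Objective rewriting for the integral witness optimization:
for finite `A, B, C`, relation `R₁ ⊆ A × B` with every `a` incident to some
`b`, and an assignment `C_b ⊆ C` for each `b ∈ B` satisfying
`⋃_{b : (a,b) ∈ R₁} C_b = C` for all `a`, one has
`∑_b |C_b| = ∑_c |{b : c ∈ C_b}|`; and the minimum of `∑_b |C_b|` over all
feasible assignments equals `|C| · x*`. -/
theorem integral_objective_rewriting {α β γ : Type}
    [Fintype α] [Fintype β] [Fintype γ]
    (R1 : Set (α × β)) (ha : ∀ a : α, ∃ b, (a, b) ∈ R1) :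
    (∀ CB : β → Finset γ,
      (∀ (a : α) (c : γ), ∃ b, (a, b) ∈ R1 ∧ c ∈ CB b) →
      ∑ b : β, (CB b).card =
        ∑ c : γ, (Finset.univ.filter fun b : β => c ∈ CB b).card) ∧
    IsLeast {n | ∃ CB : β → Finset γ,
        (∀ (a : α) (c : γ), ∃ b, (a, b) ∈ R1 ∧ c ∈ CB b) ∧
        n = ∑ b : β, (CB b).card}
      (Fintype.card γ * coverNum R1) :=
  integral_objective_rewriting_general R1 ha
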